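/- arXiv:1611.02335 — 2 statements merged into one kernel-verified Lean document; each statement's English description precedes it below -/
import Mathlib

section
/- Let (η(t))_{t≥0} be a stochastic process on a probability space with almost surely continuous sample paths whose finite-dimensional distributions are centered (mean-zero) Gaussian with covariance Cov(η(s),η(t)) = κ(|s−t|) for a stationary covariance function κ, and assume (A1): (κ(0) − κ(2^{−n}))^{−1} ≥ n^6 for all integers n ≥ 1. Then for every M > 0 and every integer d ≥ 1 there exist τ* > 1 and positive constants K₁, K₂ (depending only on d, M and κ) such that for all τ > τ*, P( sup_{t≥τ} |η(t) h_d(t)| ≥ M ) ≤ Σ_{j=0}^∞ K₁ exp(−K₂ (τ+j)²); moreover, the right-hand side tends to 0 as τ → ∞. -/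
open MeasureTheory ProbabilityTheory Filter Topology
open scoped ENNReal NNReal

noncomputable section

/-- The function `h_d` of the paper: `h_d(t) = (d+1)/(1+log(1-e^{-1}))` for `t ≤ 1` and
`h_d(t) = (d+1)/(t+log(1-e^{-t}))` for `t > 1`. -/
def hfun (d : ℕ) (t : ℝ) : ℝ :=
  if t ≤ 1 then (d + 1) / (1 + Real.log (1 - Real.exp (-1)))
  else (d + 1) / (t + Real.log (1 - Real.exp (-t)))

/-- `η` is a stochastic process on `(W, P)` with almost surely continuous sample paths on
`[0,∞)`, whose finite-dimensional distributions are centered Gaussian with stationary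
covariance `Cov(η(s), η(t)) = κ(|s-t|)`; the finite-dimensional distributions are encoded by
requiring every finite linear combination `∑ cᵢ η(tᵢ)` to be a centered real Gaussian with
the corresponding variance `∑ᵢ∑ⱼ cᵢ cⱼ κ(|tᵢ-tⱼ|)`. -/
def IsCenteredStationaryGP {W : Type*} [MeasurableSpace W] (P : Measure W)
    (η : ℝ → W → ℝ) (κ : ℝ → ℝ) : Prop :=
  (∀ᵐ w ∂P, ContinuousOn (fun t => η t w) (Set.Ici 0)) ∧
  ∀ (n : ℕ) (t : Fin n → ℝ) (c : Fin n → ℝ), (∀ i, 0 ≤ t i) →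
    Measure.map (fun w => ∑ i, c i * η (t i) w) P =
      gaussianReal 0 (∑ i, ∑ j, c i * c j * κ |t i - t j|).toNNReal

/-- Assumption (A1): `(κ(0) - κ(2^{-n}))⁻¹ ≥ n⁶` for all integers `n ≥ 1`. -/
def AssumptionA1 (κ : ℝ → ℝ) : Prop :=
  ∀ n : ℕ, 1 ≤ n → ((n : ℝ))^6 ≤ (κ 0 - κ ((2:ℝ)^(-(n:ℤ))))⁻¹

/-! On a unit interval `[a, a + 1)`, every dyadic point `a + k / 2^n` is reached from `a` by a
chain of increments across dyadic intervals, at most one of each length `2^{-(m+1)}`. Allowing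
the `m`-th step the threshold `b / (4 (m+1)^2)` costs at most `b / 2` in total. By (A1) the
increment across an interval of length `2^{-(m+1)}` is centered Gaussian with variance at most
`2 / (m+1)^6`, so it exceeds its threshold with probability `≤ 2 exp(-b² (m+1)² / 64)`, which
beats the union over the `2^{m+1}` intervals of level `m`. Hence
`P(∃ dyadic x ∈ [a, a+1), |η x| ≥ b) ≤ 6 exp(-b² / (128 V))` with `V ≥ max(κ 0, 1)`.

Since `h_d(t) ≤ 2 (d+1) / t` for `t ≥ 2` and the paths are a.s. continuous, the event
`sup_{t ≥ τ} |η(t) h_d(t)| ≥ M` forces `|η| ≥ c (τ + j)` with `c = M / (4 (d+1))` at a dyadic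
point of some `[τ + j, τ + j + 1)`; take `b = c (τ + j)` and sum over `j`. -/

open Real

lemma neg_one_le_log_one_sub_exp_neg {t : ℝ} (ht : 1 ≤ t) : -1 ≤ log (1 - exp (-t)) := by
  have hexp : exp (-t) ≤ exp (-1) := exp_le_exp.2 (by linarith)
  have hhalf := exp_neg_one_lt_half
  rw [le_log_iff_exp_le (by linarith)]
  linarith

lemma hfun_eq_of_one_lt (d : ℕ) {t : ℝ} (ht : 1 < t) :
    hfun d t = (d + 1) / (t + log (1 - exp (-t))) := if_neg ht.not_ge

lemma hfun_pos (d : ℕ) {t : ℝ} (ht : 1 < t) : 0 < hfun d t := by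
  rw [hfun_eq_of_one_lt d ht]
  have := neg_one_le_log_one_sub_exp_neg ht.le
  exact div_pos (by positivity) (by linarith)

lemma hfun_le (d : ℕ) {t : ℝ} (ht : 2 ≤ t) : hfun d t ≤ 2 * (d + 1) / t := by
  have := neg_one_le_log_one_sub_exp_neg (t := t) (by linarith)
  calc hfun d t = (d + 1) / (t + log (1 - exp (-t))) := hfun_eq_of_one_lt d (by linarith)
    _ ≤ (d + 1) / (t / 2) :=
        div_le_div_of_nonneg_left (by positivity) (by positivity) (by linarith)
    _ = 2 * (d + 1) / t := by field_simp

lemma continuousAt_hfun (d : ℕ) {t : ℝ} (ht : 1 < t) : ContinuousAt (hfun d) t := by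
  have hD := neg_one_le_log_one_sub_exp_neg ht.le
  have hexp : exp (-t) < 1 := exp_lt_one_iff.2 (by linarith)
  have hcont : ContinuousAt (fun x => (d + 1 : ℝ) / (x + log (1 - exp (-x)))) t :=
    continuousAt_const.div
      (continuousAt_id.add (ContinuousAt.log (by fun_prop) (by linarith))) (by linarith)
  exact hcont.congr <| (eventually_gt_nhds ht).mono fun x hx => (hfun_eq_of_one_lt d hx).symm

lemma lt_abs_of_lt_abs_mul_hfun {d : ℕ} {M t x : ℝ} (ht : 2 ≤ t)
    (h : M / 2 < |x * hfun d t|) : M / (4 * (d + 1)) * t < |x| := by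
  have hpos := hfun_pos d (by linarith : (1 : ℝ) < t)
  have hle := hfun_le d ht
  rw [abs_mul, abs_of_pos hpos] at h
  have h2 : M / 2 < |x| * (2 * (d + 1) / t) :=
    h.trans_le (mul_le_mul_of_nonneg_left hle (abs_nonneg x))
  rw [← mul_div_assoc, lt_div_iff₀ (by positivity)] at h2
  rw [div_mul_eq_mul_div, div_lt_iff₀ (by positivity)]
  linarith

section GaussianTail

variable {W : Type*} [MeasurableSpace W] {P : Measure W} {X : W → ℝ}

lemma hasSubgaussianMGF_of_map_eq_gaussianReal {v u : ℝ≥0}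
    (hX : P.map X = gaussianReal 0 v) (hvu : v ≤ u) : HasSubgaussianMGF X u P := by
  have hXm : AEMeasurable X P := aemeasurable_of_map_neZero (by rw [hX]; infer_instance)
  refine (HasSubgaussianMGF.id_map_iff hXm).1 ⟨fun t => ?_, fun t => ?_⟩
  · rw [hX]
    exact integrable_exp_mul_gaussianReal t
  · rw [hX, mgf_id_gaussianReal]
    simp only [zero_mul, zero_add]
    gcongr

lemma measure_le_abs_le_of_map_eq_gaussianReal [IsFiniteMeasure P] {v : ℝ≥0} {u b : ℝ}
    (hX : P.map X = gaussianReal 0 v) (hvu : (v : ℝ) ≤ u) (hb : 0 ≤ b) :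
    P {w | b ≤ |X w|} ≤ ENNReal.ofReal (2 * exp (-b ^ 2 / (2 * u))) := by
  have hu : ((u.toNNReal : ℝ≥0) : ℝ) = u := Real.coe_toNNReal _ (v.2.trans hvu)
  have hsub := hasSubgaussianMGF_of_map_eq_gaussianReal hX (u := u.toNNReal)
    (by rw [← NNReal.coe_le_coe, hu]; exact hvu)
  have hright := hsub.measure_ge_le hb
  have hleft := hsub.neg.measure_ge_le hb
  rw [hu] at hright hleft
  calc P {w | b ≤ |X w|} ≤ P ({w | b ≤ X w} ∪ {w | b ≤ (-X) w}) :=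
        measure_mono fun w (hw : b ≤ |X w|) => show b ≤ X w ∨ b ≤ -X w from le_abs.1 hw
    _ ≤ P {w | b ≤ X w} + P {w | b ≤ (-X) w} := measure_union_le _ _
    _ ≤ ENNReal.ofReal (exp (-b ^ 2 / (2 * u))) + ENNReal.ofReal (exp (-b ^ 2 / (2 * u))) := by
        rw [← ofReal_measureReal, ← ofReal_measureReal]
        gcongr
    _ = ENNReal.ofReal (2 * exp (-b ^ 2 / (2 * u))) := by
        rw [← ENNReal.ofReal_add (by positivity) (by positivity), ← two_mul]

end GaussianTail

namespace IsCenteredStationaryGP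

variable {W : Type*} [MeasurableSpace W] {P : Measure W} {η : ℝ → W → ℝ} {κ : ℝ → ℝ}

lemma map_eval (hGP : IsCenteredStationaryGP P η κ) {s : ℝ} (hs : 0 ≤ s) :
    P.map (η s) = gaussianReal 0 (κ 0).toNNReal := by
  simpa using hGP.2 1 ![s] ![1] (by simpa using hs)

lemma map_sub (hGP : IsCenteredStationaryGP P η κ) {s t : ℝ} (hs : 0 ≤ s) (ht : 0 ≤ t) :
    P.map (fun w => η s w - η t w) = gaussianReal 0 (2 * (κ 0 - κ |s - t|)).toNNReal := by
  have h := hGP.2 2 ![s, t] ![1, -1] (by simp [Fin.forall_fin_two, hs, ht])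
  simp only [Fin.sum_univ_two, Matrix.cons_val_zero, Matrix.cons_val_one, one_mul, neg_mul,
    mul_one, sub_self, abs_zero, mul_neg, ← sub_eq_add_neg, abs_sub_comm t s] at h
  rw [h]
  congr 2
  ring

end IsCenteredStationaryGP

lemma AssumptionA1.sub_le {κ : ℝ → ℝ} (hA1 : AssumptionA1 κ) {n : ℕ} (hn : 1 ≤ n) :
    κ 0 - κ ((2 : ℝ) ^ (-(n : ℤ))) ≤ ((n : ℝ) ^ 6)⁻¹ :=
  le_inv_of_le_inv₀ (by positivity) (hA1 n hn)

lemma abs_le_of_abs_dyadic_increment_le {f : ℝ → ℝ} {a : ℝ} {ε : ℕ → ℝ}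
    (hε : ∀ m k : ℕ, k < 2 ^ (m + 1) →
      |f (a + (k + 1) / 2 ^ (m + 1)) - f (a + k / 2 ^ (m + 1))| ≤ ε m) :
    ∀ n k : ℕ, k < 2 ^ n → |f (a + k / 2 ^ n)| ≤ |f a| + ∑ m ∈ Finset.range n, ε m := by
  intro n
  induction n with
  | zero => simp
  | succ n ih =>
    intro k hk
    have hpar : |f (a + k / 2 ^ (n + 1)) - f (a + (k / 2 : ℕ) / 2 ^ n)| ≤ ε n := by
      have hpt (q : ℕ) : ((2 * q : ℕ) : ℝ) / 2 ^ (n + 1) = q / 2 ^ n := by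
        rw [pow_succ]; push_cast; field_simp
      rcases Nat.even_or_odd' k with ⟨q, rfl | rfl⟩
      · rw [show 2 * q / 2 = q by omega, hpt, sub_self, abs_zero]
        exact (abs_nonneg _).trans (hε n 0 (by positivity))
      · rw [show (2 * q + 1) / 2 = q by omega, ← hpt]
        simpa using hε n (2 * q) (by omega)
    have hq := ih (k / 2) (by omega)
    rw [Finset.sum_range_succ]
    have := abs_sub_abs_le_abs_sub (f (a + k / 2 ^ (n + 1))) (f (a + (k / 2 : ℕ) / 2 ^ n))
    linarith

lemma sum_range_inv_succ_sq_le_two (n : ℕ) :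
    ∑ m ∈ Finset.range n, ((m + 1 : ℝ) ^ 2)⁻¹ ≤ 2 := by
  have h := sum_Ioo_inv_sq_le (α := ℝ) 0 (n + 1)
  rw [← Finset.Ico_add_one_left_eq_Ioo, ← Finset.sum_Ico_add'] at h
  simpa only [Finset.range_eq_Ico, Nat.cast_add, Nat.cast_one, Nat.cast_zero, zero_add, div_one]
    using h

lemma two_pow_succ_mul_exp_le {γ : ℝ} (hγ : 1 ≤ γ) (m : ℕ) :
    2 ^ (m + 1) * exp (-(2 * γ * (m + 1) ^ 2)) ≤ exp (-γ) ^ (m + 1) := by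
  have h2 : (2 : ℝ) ≤ exp γ := by linarith [add_one_le_exp γ]
  have hγm : 0 ≤ γ * (m * (m + 1)) := by positivity
  calc 2 ^ (m + 1) * exp (-(2 * γ * (m + 1) ^ 2))
      ≤ exp γ ^ (m + 1) * exp (-(2 * γ * (m + 1) ^ 2)) := by gcongr
    _ = exp ((m + 1) * γ - 2 * γ * (m + 1) ^ 2) := by
        rw [← exp_nat_mul, ← exp_add]; push_cast; ring_nf
    _ ≤ exp ((m + 1) * -γ) := exp_le_exp.2 (by nlinarith)
    _ = exp (-γ) ^ (m + 1) := by rw [← exp_nat_mul]; push_cast; ring_nf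

lemma tsum_ofReal_two_mul_pow_succ_le {r : ℝ} (hr0 : 0 ≤ r) (hr : r ≤ 1 / 2) :
    ∑' m : ℕ, ENNReal.ofReal (2 * r ^ (m + 1)) ≤ ENNReal.ofReal (4 * r) := by
  have hgeom : HasSum (fun m : ℕ => 2 * r * r ^ m) (2 * r * (1 - r)⁻¹) :=
    (hasSum_geometric_of_lt_one hr0 (by linarith)).mul_left (2 * r)
  simp_rw [pow_succ', ← mul_assoc]
  rw [← ENNReal.ofReal_tsum_of_nonneg (fun m => by positivity) hgeom.summable, hgeom.tsum_eq]
  refine ENNReal.ofReal_le_ofReal ?_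
  rw [← div_eq_mul_inv, div_le_iff₀ (by linarith)]
  nlinarith

section Chaining

variable {W : Type*}

def dyadicIncrement (η : ℝ → W → ℝ) (a : ℝ) (m k : ℕ) (w : W) : ℝ :=
  η (a + (k + 1) / 2 ^ (m + 1)) w - η (a + k / 2 ^ (m + 1)) w

lemma setOf_exists_dyadic_le_abs_subset (η : ℝ → W → ℝ) (a : ℝ) {b : ℝ} (hb : 0 ≤ b) :
    {w | ∃ n k : ℕ, k < 2 ^ n ∧ b ≤ |η (a + k / 2 ^ n) w|} ⊆
      {w | b / 2 ≤ |η a w|} ∪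
        ⋃ (m : ℕ) (k : Fin (2 ^ (m + 1))),
          {w | b / (4 * (m + 1) ^ 2) ≤ |dyadicIncrement η a m k w|} := by
  rintro w ⟨n, k, hk, hbk⟩
  by_contra hw
  simp only [Set.mem_union, Set.mem_iUnion, Set.mem_ofPred_eq, not_or, not_exists,
    not_le] at hw
  obtain ⟨h0, hinc⟩ := hw
  have hchain := abs_le_of_abs_dyadic_increment_le (f := (η · w)) (a := a)
    (ε := fun m => b / (4 * (m + 1) ^ 2)) (fun m k hk => (hinc m ⟨k, hk⟩).le) n k hk
  have hsum : ∑ m ∈ Finset.range n, b / (4 * ((m : ℝ) + 1) ^ 2) =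
      b / 4 * ∑ m ∈ Finset.range n, ((m + 1 : ℝ) ^ 2)⁻¹ := by
    rw [Finset.mul_sum]
    exact Finset.sum_congr rfl fun m _ => by field_simp
  rw [hsum] at hchain
  have := mul_le_mul_of_nonneg_left (sum_range_inv_succ_sq_le_two n)
    (by positivity : 0 ≤ b / 4)
  linarith

end Chaining

section DyadicBounds

variable {W : Type*} [MeasurableSpace W] {P : Measure W} [IsFiniteMeasure P]
  {η : ℝ → W → ℝ} {κ : ℝ → ℝ}

lemma measure_le_abs_dyadicIncrement_le (hGP : IsCenteredStationaryGP P η κ)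
    (hA1 : AssumptionA1 κ) {a b : ℝ} (ha : 0 ≤ a) (hb : 0 ≤ b) (m k : ℕ) :
    P {w | b / (4 * (m + 1) ^ 2) ≤ |dyadicIncrement η a m k w|} ≤
      ENNReal.ofReal (2 * exp (-(2 * (b ^ 2 / 128) * (m + 1) ^ 2))) := by
  have hdist : |(a + (k + 1) / 2 ^ (m + 1)) - (a + k / 2 ^ (m + 1))| =
      (2 : ℝ) ^ (-((m + 1 : ℕ) : ℤ)) := by
    rw [zpow_neg, zpow_natCast, ← one_div, abs_of_nonneg (by ring_nf; positivity)]
    ring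
  have hvar := hA1.sub_le (n := m + 1) (by omega)
  push_cast at hvar
  have hlaw := hGP.map_sub (s := a + (k + 1) / 2 ^ (m + 1)) (t := a + k / 2 ^ (m + 1))
    (by positivity) (by positivity)
  rw [hdist] at hlaw
  have htail := measure_le_abs_le_of_map_eq_gaussianReal hlaw
    (u := 2 * ((m + 1 : ℝ) ^ 6)⁻¹) (b := b / (4 * (m + 1) ^ 2))
    (by push_cast; rw [Real.coe_toNNReal']; exact max_le (by linarith) (by positivity))
    (by positivity)
  refine htail.trans_eq ?_
  congr 3
  field_simp
  ring

lemma measure_iUnion_le_abs_dyadicIncrement_le (hGP : IsCenteredStationaryGP P η κ)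
    (hA1 : AssumptionA1 κ) {a b : ℝ} (ha : 0 ≤ a) (hb : 12 ≤ b) (m : ℕ) :
    P (⋃ k : Fin (2 ^ (m + 1)), {w | b / (4 * (m + 1) ^ 2) ≤ |dyadicIncrement η a m k w|}) ≤
      ENNReal.ofReal (2 * exp (-(b ^ 2 / 128)) ^ (m + 1)) := by
  calc _ ≤ ∑ k : Fin (2 ^ (m + 1)),
        P {w | b / (4 * (m + 1) ^ 2) ≤ |dyadicIncrement η a m k w|} :=
        measure_iUnion_fintype_le _ _
    _ ≤ ∑ _k : Fin (2 ^ (m + 1)),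
        ENNReal.ofReal (2 * exp (-(2 * (b ^ 2 / 128) * (m + 1) ^ 2))) :=
        Finset.sum_le_sum fun k _ =>
          measure_le_abs_dyadicIncrement_le hGP hA1 ha (by linarith) m k
    _ = ENNReal.ofReal (2 * (2 ^ (m + 1) * exp (-(2 * (b ^ 2 / 128) * (m + 1) ^ 2)))) := by
        rw [Finset.sum_const, Finset.card_univ, Fintype.card_fin, nsmul_eq_mul,
          ← ENNReal.ofReal_natCast, ← ENNReal.ofReal_mul (by positivity)]
        push_cast; ring_nf
    _ ≤ ENNReal.ofReal (2 * exp (-(b ^ 2 / 128)) ^ (m + 1)) := by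
        gcongr
        exact two_pow_succ_mul_exp_le (by nlinarith) m

lemma measure_exists_dyadic_le_abs_le (hGP : IsCenteredStationaryGP P η κ)
    (hA1 : AssumptionA1 κ) {a b V : ℝ} (ha : 0 ≤ a) (hb : 12 ≤ b) (hκV : κ 0 ≤ V)
    (hV : 1 ≤ V) :
    P {w | ∃ n k : ℕ, k < 2 ^ n ∧ b ≤ |η (a + k / 2 ^ n) w|} ≤
      ENNReal.ofReal (6 * exp (-(b ^ 2 / (128 * V)))) := by
  have hexp : exp (-(b ^ 2 / 128)) ≤ exp (-(b ^ 2 / (128 * V))) := by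
    gcongr
    linarith
  have hstart :
      P {w | b / 2 ≤ |η a w|} ≤ ENNReal.ofReal (2 * exp (-(b ^ 2 / (128 * V)))) := by
    refine (measure_le_abs_le_of_map_eq_gaussianReal (hGP.map_eval ha) (u := V)
      (by rw [Real.coe_toNNReal']; exact max_le hκV (by linarith)) (by linarith)).trans ?_
    gcongr
    rw [neg_div, neg_le_neg_iff, div_pow, div_div]
    apply div_le_div_of_nonneg_left (sq_nonneg b) <;> linarith
  have hlevels : P (⋃ (m : ℕ) (k : Fin (2 ^ (m + 1))),
      {w | b / (4 * (m + 1) ^ 2) ≤ |dyadicIncrement η a m k w|}) ≤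
        ENNReal.ofReal (4 * exp (-(b ^ 2 / (128 * V)))) := by
    refine (measure_iUnion_le _).trans <| (ENNReal.tsum_le_tsum fun m =>
      measure_iUnion_le_abs_dyadicIncrement_le hGP hA1 ha hb m).trans <|
      (tsum_ofReal_two_mul_pow_succ_le (exp_nonneg _) ?_).trans (by gcongr)
    calc exp (-(b ^ 2 / 128)) ≤ exp (-1) := exp_le_exp.2 (by nlinarith)
      _ ≤ 1 / 2 := exp_neg_one_lt_half.le
  calc _ ≤ P ({w | b / 2 ≤ |η a w|} ∪ ⋃ (m : ℕ) (k : Fin (2 ^ (m + 1))),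
        {w | b / (4 * (m + 1) ^ 2) ≤ |dyadicIncrement η a m k w|}) :=
        measure_mono (setOf_exists_dyadic_le_abs_subset η a (by linarith))
    _ ≤ ENNReal.ofReal (2 * exp (-(b ^ 2 / (128 * V)))) +
        ENNReal.ofReal (4 * exp (-(b ^ 2 / (128 * V)))) :=
        (measure_union_le _ _).trans (add_le_add hstart hlevels)
    _ = ENNReal.ofReal (6 * exp (-(b ^ 2 / (128 * V)))) := by
        rw [← ENNReal.ofReal_add (by positivity) (by positivity)]
        ring_nf

end DyadicBounds

lemma exists_lt_abs_of_ofReal_le_iSup {ι : Type*} {f : ι → ℝ} {M M' : ℝ} (hM' : 0 ≤ M')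
    (hlt : M' < M) (h : ENNReal.ofReal M ≤ ⨆ i, (‖f i‖₊ : ℝ≥0∞)) : ∃ i, M' < |f i| := by
  obtain ⟨i, hi⟩ :=
    lt_iSup_iff.1 (((ENNReal.ofReal_lt_ofReal_iff (hM'.trans_lt hlt)).2 hlt).trans_le h)
  rw [← enorm_eq_nnnorm, Real.enorm_eq_ofReal_abs,
    ENNReal.ofReal_lt_ofReal_iff_of_nonneg hM'] at hi
  exact ⟨i, hi⟩

lemma exists_lt_apply_add_nat_div_two_pow {g : ℝ → ℝ} {τ t c : ℝ} (hτt : τ ≤ t)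
    (hg : ContinuousWithinAt g (Set.Ici τ) t) (hc : c < g t) :
    ∃ n m : ℕ, c < g (τ + m / 2 ^ n) := by
  have hfloor : Tendsto (fun n : ℕ => τ + ⌊(t - τ) * 2 ^ n⌋₊ / 2 ^ n) atTop (𝓝 t) := by
    have h := ((tendsto_nat_floor_mul_div_atTop (sub_nonneg.2 hτt)).comp
      (tendsto_pow_atTop_atTop_of_one_lt (one_lt_two : (1 : ℝ) < 2))).const_add τ
    rwa [add_sub_cancel] at h
  have hwithin :
      Tendsto (fun n : ℕ => τ + ⌊(t - τ) * 2 ^ n⌋₊ / 2 ^ n) atTop (𝓝[Set.Ici τ] t) :=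
    tendsto_nhdsWithin_iff.2
      ⟨hfloor, .of_forall fun n => (le_add_of_nonneg_right (by positivity) : τ ≤ _)⟩
  obtain ⟨n, hn⟩ := ((hg.tendsto.comp hwithin).eventually (lt_mem_nhds hc)).exists
  exact ⟨n, _, hn⟩

lemma nat_div_two_pow_eq (m n : ℕ) :
    (m : ℝ) / 2 ^ n = (m / 2 ^ n : ℕ) + (m % 2 ^ n : ℕ) / 2 ^ n := by
  conv_lhs => rw [← Nat.div_add_mod m (2 ^ n)]
  push_cast
  field_simp

lemma setOf_ofReal_le_iSup_subset {W : Type*} (η : ℝ → W → ℝ) (d : ℕ) {M τ : ℝ} (hM : 0 < M)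
    (hτ : 2 ≤ τ) :
    {w | ENNReal.ofReal M ≤ ⨆ t : {s : ℝ // τ ≤ s}, (‖η t w * hfun d t‖₊ : ℝ≥0∞)} ⊆
      {w | ¬ ContinuousOn (η · w) (Set.Ici 0)} ∪
        ⋃ j : ℕ, {w | ∃ n k : ℕ, k < 2 ^ n ∧
          M / (4 * (d + 1)) * (τ + j) ≤ |η (τ + j + k / 2 ^ n) w|} := by
  intro w hw
  by_cases hcont : ContinuousOn (η · w) (Set.Ici 0)
  swap
  · exact Or.inl hcont
  obtain ⟨⟨t, ht⟩, hMt⟩ := exists_lt_abs_of_ofReal_le_iSup (by linarith) (half_lt_self hM) hw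
  have hη : ContinuousWithinAt (η · w) (Set.Ici τ) t :=
    (hcont t (Set.mem_Ici.2 (by linarith))).mono (Set.Ici_subset_Ici.2 (by linarith))
  have hg : ContinuousWithinAt (fun x => |η x w * hfun d x|) (Set.Ici τ) t :=
    (hη.mul (continuousAt_hfun d (by linarith)).continuousWithinAt).abs
  obtain ⟨n, m, hnm⟩ := exists_lt_apply_add_nat_div_two_pow ht hg hMt
  have hs : 2 ≤ τ + m / 2 ^ n := le_add_of_le_of_nonneg hτ (by positivity)
  have hlt := lt_abs_of_lt_abs_mul_hfun hs hnm
  rw [nat_div_two_pow_eq, ← add_assoc] at hlt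
  refine Or.inr (Set.mem_iUnion.2 ⟨m / 2 ^ n, n, m % 2 ^ n, Nat.mod_lt _ (by positivity), ?_⟩)
  exact le_trans (mul_le_mul_of_nonneg_left (le_add_of_nonneg_right (by positivity))
    (by positivity)) hlt.le

lemma measure_setOf_ofReal_le_iSup_le_tsum {W : Type*} [MeasurableSpace W] {P : Measure W}
    {η : ℝ → W → ℝ} (hcont : ∀ᵐ w ∂P, ContinuousOn (η · w) (Set.Ici 0)) (d : ℕ) {M τ : ℝ}
    (hM : 0 < M) (hτ : 2 ≤ τ) :
    P {w | ENNReal.ofReal M ≤ ⨆ t : {s : ℝ // τ ≤ s}, (‖η t w * hfun d t‖₊ : ℝ≥0∞)} ≤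
      ∑' j : ℕ, P {w | ∃ n k : ℕ, k < 2 ^ n ∧
        M / (4 * (d + 1)) * (τ + j) ≤ |η (τ + j + k / 2 ^ n) w|} := by
  refine (measure_mono (setOf_ofReal_le_iSup_subset η d hM hτ)).trans <|
    (measure_union_le _ _).trans ?_
  rw [ae_iff.1 hcont, zero_add]
  exact measure_iUnion_le _

lemma exp_neg_mul_add_sq_le {K τ : ℝ} (hK : 0 ≤ K) (hτ : 0 ≤ τ) (j : ℕ) :
    exp (-K * (τ + j) ^ 2) ≤ exp (-K) ^ j := by
  have hj : (j : ℝ) ≤ (τ + j) ^ 2 := by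
    have : (j : ℝ) ≤ (j : ℝ) ^ 2 := by exact_mod_cast Nat.le_self_pow two_ne_zero j
    nlinarith
  rw [← exp_nat_mul]
  exact exp_le_exp.2 (by nlinarith)

lemma summable_exp_neg_mul_add_sq {K τ : ℝ} (hK : 0 < K) (hτ : 0 ≤ τ) :
    Summable fun j : ℕ => exp (-K * (τ + j) ^ 2) :=
  .of_nonneg_of_le (fun _ => (exp_pos _).le) (exp_neg_mul_add_sq_le hK.le hτ)
    (summable_geometric_of_lt_one (exp_nonneg _) (exp_lt_one_iff.2 (by linarith)))

lemma tendsto_tsum_mul_exp_neg_mul_add_sq (A : ℝ) {K : ℝ} (hK : 0 < K) :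
    Tendsto (fun τ : ℝ => ∑' j : ℕ, A * exp (-K * (τ + j) ^ 2)) atTop (𝓝 0) := by
  have hterm (j : ℕ) : Tendsto (fun τ : ℝ => A * exp (-K * (τ + j) ^ 2)) atTop (𝓝 0) := by
    have hsq : Tendsto (fun τ : ℝ => (τ + j) ^ 2) atTop atTop :=
      (tendsto_pow_atTop two_ne_zero).comp (tendsto_atTop_add_const_right _ _ tendsto_id)
    simpa using
      (tendsto_exp_atBot.comp (hsq.const_mul_atTop_of_neg (neg_lt_zero.2 hK))).const_mul A
  have hbound : ∀ᶠ τ : ℝ in atTop, ∀ j : ℕ,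
      ‖A * exp (-K * (τ + j) ^ 2)‖ ≤ |A| * exp (-K) ^ j := by
    filter_upwards [eventually_ge_atTop 0] with τ hτ j
    rw [norm_mul, norm_of_nonneg (exp_pos _).le]
    exact mul_le_mul_of_nonneg_left (exp_neg_mul_add_sq_le hK.le hτ j) (abs_nonneg A)
  simpa using tendsto_tsum_of_dominated_convergence
    ((summable_geometric_of_lt_one (exp_nonneg _) (exp_lt_one_iff.2 (by linarith))).mul_left |A|)
    hterm hbound

theorem gp_weighted_tail_sup_bound_general
    {d : ℕ}
    {W : Type*} [MeasurableSpace W] (P : Measure W) [IsProbabilityMeasure P]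
    (η : ℝ → W → ℝ) (κ : ℝ → ℝ)
    (hGP : IsCenteredStationaryGP P η κ)
    (hA1 : AssumptionA1 κ)
    (M : ℝ) (hM : 0 < M) :
    ∃ τstar > (1:ℝ), ∃ K₁ > (0:ℝ), ∃ K₂ > (0:ℝ),
      (∀ τ : ℝ, τstar < τ →
        P {w | ENNReal.ofReal M ≤
            ⨆ t : {s : ℝ // τ ≤ s}, (‖η (t : ℝ) w * hfun d (t : ℝ)‖₊ : ℝ≥0∞)} ≤
          ENNReal.ofReal (∑' j : ℕ, K₁ * Real.exp (-K₂ * (τ + j)^2))) ∧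
      Tendsto (fun τ : ℝ => ∑' j : ℕ, K₁ * Real.exp (-K₂ * (τ + j)^2)) atTop (𝓝 0) := by
  set c := M / (4 * (d + 1))
  have hc : 0 < c := by positivity
  obtain ⟨V, hκV, hV⟩ : ∃ V, κ 0 ≤ V ∧ 1 ≤ V := ⟨max (κ 0) 1, le_max_left _ _, le_max_right _ _⟩
  refine ⟨max 2 (12 / c), one_lt_two.trans_le (le_max_left _ _), 6, by norm_num,
    c ^ 2 / (128 * V), by positivity, fun τ hτ => ?_,
    tendsto_tsum_mul_exp_neg_mul_add_sq 6 (by positivity)⟩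
  have hτ2 : 2 ≤ τ := (le_max_left _ _).trans hτ.le
  have hcτ : 12 ≤ c * τ := (div_le_iff₀' hc).1 ((le_max_right _ _).trans hτ.le)
  calc _ ≤ ∑' j : ℕ, P {w | ∃ n k : ℕ, k < 2 ^ n ∧ c * (τ + j) ≤ |η (τ + j + k / 2 ^ n) w|} :=
        measure_setOf_ofReal_le_iSup_le_tsum hGP.1 d hM hτ2
    _ ≤ ∑' j : ℕ, ENNReal.ofReal (6 * exp (-(c ^ 2 / (128 * V)) * (τ + j) ^ 2)) := by
        refine ENNReal.tsum_le_tsum fun j => (measure_exists_dyadic_le_abs_le hGP hA1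
          (by positivity) ?_ hκV hV).trans_eq ?_
        · nlinarith [mul_nonneg hc.le (Nat.cast_nonneg (α := ℝ) j)]
        · ring_nf
    _ = _ := (ENNReal.ofReal_tsum_of_nonneg (fun j => by positivity)
        ((summable_exp_neg_mul_add_sq (by positivity) (by linarith)).mul_left 6)).symm

/-- Tail bound for the weighted supremum of a centered stationary Gaussian process satisfying
(A1): there are `τ* > 1` and constants `K₁, K₂ > 0` (depending only on `d`, `M`, `κ`) such that
for all `τ > τ*`, `P(sup_{t ≥ τ} |η(t) h_d(t)| ≥ M) ≤ ∑_{j≥0} K₁ exp(-K₂ (τ+j)²)`, and the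
bound tends to `0` as `τ → ∞`. -/
theorem gp_weighted_tail_sup_bound
    {d : ℕ} (hd1 : 1 ≤ d)
    {W : Type*} [MeasurableSpace W] (P : Measure W) [IsProbabilityMeasure P]
    (η : ℝ → W → ℝ) (κ : ℝ → ℝ)
    (hGP : IsCenteredStationaryGP P η κ)
    (hA1 : AssumptionA1 κ)
    (M : ℝ) (hM : 0 < M) :
    ∃ τstar > (1:ℝ), ∃ K₁ > (0:ℝ), ∃ K₂ > (0:ℝ),
      (∀ τ : ℝ, τstar < τ →
        P {w | ENNReal.ofReal M ≤
            ⨆ t : {s : ℝ // τ ≤ s}, (‖η (t : ℝ) w * hfun d (t : ℝ)‖₊ : ℝ≥0∞)} ≤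
          ENNReal.ofReal (∑' j : ℕ, K₁ * Real.exp (-K₂ * (τ + j)^2))) ∧
      Tendsto (fun τ : ℝ => ∑' j : ℕ, K₁ * Real.exp (-K₂ * (τ + j)^2)) atTop (𝓝 0) :=
  gp_weighted_tail_sup_bound_general P η κ hGP hA1 M hM
end
end

section
/- Fix x ∈ [0,1]^d, τ ≥ 1, δ ∈ (0,1/2), and Ω₀ > 0. Let θ₀ = (Ω₀, η_{0,0}, …, η_{d,0}) and θ = (Ω, η_0, …, η_d) with all η_j, η_{j,0} : [0,∞) → ℝ continuous, |Ω/Ω₀ − 1| < δ, and sup_{t∈[0,τ]} |η_j(t) − η_{j,0}(t)| ≤ δ/(1+τ) for every j ∈ {0,…,d}. Then ∫_0^τ log(f_x(t,θ₀)/f_x(t,θ)) f_x(t,θ₀) dt ≤ δ ( 1/(1−δ) + (d+1)/(τ+1) + Ω₀(d+1) + Ω₀ ∫_0^∞ t f_x(t,θ₀) dt ). -/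
open MeasureTheory ProbabilityTheory Filter Topology
open scoped ENNReal NNReal

noncomputable section

/-- The sigmoid (logistic) function `σ(x) = 1/(1+e^{-x})`. -/
def sigmoid (y : ℝ) : ℝ := 1 / (1 + Real.exp (-y))

/-- `Y_x(t) = η₀(t) + ∑_{j=1}^d x_j η_j(t)`. -/
def Yproc {d : ℕ} (η : Fin (d + 1) → ℝ → ℝ) (x : Fin d → ℝ) (t : ℝ) : ℝ :=
  η 0 t + ∑ j : Fin d, x j * η j.succ t

/-- The survival density `f_x(t,θ) = Ω σ(Y_x(t)) exp(-∫₀ᵗ Ω σ(Y_x(s)) ds)` for `t ≥ 0`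
(and `0` for `t < 0`), for a parameter `θ = (Ω, η)`. -/
def dens {d : ℕ} (θ : ℝ × (Fin (d + 1) → ℝ → ℝ)) (x : Fin d → ℝ) (t : ℝ) : ℝ :=
  if 0 ≤ t then
    θ.1 * sigmoid (Yproc θ.2 x t) *
      Real.exp (-(∫ s in (0:ℝ)..t, θ.1 * sigmoid (Yproc θ.2 x s)))
  else 0

/-- The unit cube `[0,1]^d` of covariates. -/
def unitCube (d : ℕ) : Set (Fin d → ℝ) := Set.univ.pi fun _ => Set.Icc (0:ℝ) 1

/-!
On `[0, τ]` the log-likelihood ratio of two survival densities `f = h e^{-Λ}` is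
`log (h₀ / h) + (Λ - Λ₀)`, with `h` the hazard rate and `Λ` the cumulative hazard. Because `σ` is
`1/4`-Lipschitz and `log σ` is `1`-Lipschitz, and `|Y_x - Y_{x,0}| ≤ ε := (d+1)δ/(1+τ)` on `[0, τ]`,
this ratio is at most `c + κ Λ₀(t)` with `c = max (log (Ω₀/Ω)) 0 + ε + τ max(Ω₀, Ω) ε / 4` and
`κ = max (Ω/Ω₀ - 1) 0`. Under `f₀` the cumulative hazard `Λ₀` is standard exponential, so
`∫₀^τ (c + κ Λ₀) f₀ ≤ c + κ`; finally `|Ω/Ω₀ - 1| < δ` gives `c + κ ≤ δ/(1-δ) + ε + δ Ω₀ (d+1)`.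
-/

namespace Real

lemma sigmoid_mul_one_sub_sigmoid_le (y : ℝ) : sigmoid y * (1 - sigmoid y) ≤ 4⁻¹ := by
  nlinarith [sq_nonneg (sigmoid y - 2⁻¹)]

lemma lipschitzWith_sigmoid : LipschitzWith 4⁻¹ sigmoid := by
  refine lipschitzWith_of_nnnorm_deriv_le differentiable_sigmoid fun y => ?_
  rw [← NNReal.coe_le_coe, coe_nnnorm, deriv_sigmoid, Real.norm_eq_abs,
    abs_of_nonneg (mul_nonneg (sigmoid_nonneg y) (by linarith [sigmoid_le_one y]))]
  simpa using sigmoid_mul_one_sub_sigmoid_le y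

lemma hasDerivAt_log_sigmoid (y : ℝ) :
    HasDerivAt (fun y => log (sigmoid y)) (1 - sigmoid y) y := by
  convert (hasDerivAt_sigmoid y).log (sigmoid_pos y).ne' using 1
  field_simp [(sigmoid_pos y).ne']

lemma lipschitzWith_log_sigmoid : LipschitzWith 1 fun y => log (sigmoid y) := by
  refine lipschitzWith_of_nnnorm_deriv_le
    (fun y => (hasDerivAt_log_sigmoid y).differentiableAt) fun y => ?_
  rw [← NNReal.coe_le_coe, coe_nnnorm, (hasDerivAt_log_sigmoid y).deriv, Real.norm_eq_abs,
    abs_of_nonneg (by linarith [sigmoid_le_one y])]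
  simpa using (sigmoid_pos y).le

lemma abs_sigmoid_sub_sigmoid_le (y₀ y : ℝ) : |sigmoid y - sigmoid y₀| ≤ 4⁻¹ * |y - y₀| := by
  simpa [Real.dist_eq] using lipschitzWith_sigmoid.dist_le_mul y y₀

lemma log_mul_sigmoid_sub_log_mul_sigmoid_le {Ω₀ Ω : ℝ} (hΩ₀ : 0 < Ω₀) (hΩ : 0 < Ω)
    (y₀ y : ℝ) :
    log (Ω₀ * sigmoid y₀) - log (Ω * sigmoid y) ≤ max (log (Ω₀ / Ω)) 0 + |y - y₀| := by
  have hσ : log (sigmoid y₀) - log (sigmoid y) ≤ |y - y₀| := by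
    simpa [Real.dist_eq, abs_sub_comm] using
      (le_abs_self _).trans (lipschitzWith_log_sigmoid.dist_le_mul y₀ y)
  rw [log_mul hΩ₀.ne' (sigmoid_pos y₀).ne', log_mul hΩ.ne' (sigmoid_pos y).ne',
    log_div hΩ₀.ne' hΩ.ne']
  linarith [le_max_left (log Ω₀ - log Ω) 0]

lemma mul_sigmoid_sub_mul_sigmoid_le {Ω₀ Ω : ℝ} (hΩ₀ : 0 < Ω₀) (hΩ : 0 ≤ Ω) (y₀ y : ℝ) :
    Ω * sigmoid y - Ω₀ * sigmoid y₀ ≤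
      max (Ω / Ω₀ - 1) 0 * (Ω₀ * sigmoid y₀) + max Ω₀ Ω * (4⁻¹ * |y - y₀|) := by
  have hΩ_sub : Ω - Ω₀ ≤ max (Ω / Ω₀ - 1) 0 * Ω₀ :=
    calc Ω - Ω₀ = (Ω / Ω₀ - 1) * Ω₀ := by field_simp
      _ ≤ max (Ω / Ω₀ - 1) 0 * Ω₀ := mul_le_mul_of_nonneg_right (le_max_left _ _) hΩ₀.le
  have hσ : sigmoid y - sigmoid y₀ ≤ 4⁻¹ * |y - y₀| :=
    (le_abs_self _).trans (abs_sigmoid_sub_sigmoid_le y₀ y)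
  calc Ω * sigmoid y - Ω₀ * sigmoid y₀
        = (Ω - Ω₀) * sigmoid y₀ + Ω * (sigmoid y - sigmoid y₀) := by ring
    _ ≤ max (Ω / Ω₀ - 1) 0 * Ω₀ * sigmoid y₀ + max Ω₀ Ω * (4⁻¹ * |y - y₀|) :=
        add_le_add (mul_le_mul_of_nonneg_right hΩ_sub (sigmoid_nonneg y₀))
          ((mul_le_mul_of_nonneg_left hσ hΩ).trans
            (mul_le_mul_of_nonneg_right (le_max_right _ _) (by positivity)))
    _ = _ := by ring

end Real

section Survival

variable {h h₀ : ℝ → ℝ}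

def cumHazard (h : ℝ → ℝ) (t : ℝ) : ℝ := ∫ s in (0:ℝ)..t, h s

def survDens (h : ℝ → ℝ) (t : ℝ) : ℝ := h t * Real.exp (-cumHazard h t)

lemma hasDerivAt_cumHazard (hh : Continuous h) (t : ℝ) : HasDerivAt (cumHazard h) (h t) t :=
  (hh.integral_hasStrictDerivAt 0 t).hasDerivAt

lemma continuous_cumHazard (hh : Continuous h) : Continuous (cumHazard h) :=
  continuous_iff_continuousAt.2 fun t => (hasDerivAt_cumHazard hh t).continuousAt

lemma continuous_survDens (hh : Continuous h) : Continuous (survDens h) :=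
  hh.mul (continuous_cumHazard hh).neg.rexp

lemma survDens_pos (hpos : ∀ t, 0 < h t) (t : ℝ) : 0 < survDens h t :=
  mul_pos (hpos t) (Real.exp_pos _)

lemma cumHazard_sub_cumHazard (hh : Continuous h) (hh₀ : Continuous h₀) (t : ℝ) :
    cumHazard h t - cumHazard h₀ t = ∫ s in (0:ℝ)..t, (h s - h₀ s) :=
  (intervalIntegral.integral_sub (hh.intervalIntegrable _ _) (hh₀.intervalIntegrable _ _)).symm

/-- The antiderivative of `(c + κ Λ) h e^{-Λ}` is `-(c + κ (1 + Λ)) e^{-Λ}`, whose value at `0`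
is `-(c + κ)` and which is nonpositive. -/
lemma intervalIntegral_affine_cumHazard_mul_survDens_le (hh : Continuous h) {τ : ℝ} (hτ : 0 ≤ τ)
    (hnonneg : ∀ t ∈ Set.Icc 0 τ, 0 ≤ h t) {c κ : ℝ} (hc : 0 ≤ c) (hκ : 0 ≤ κ) :
    ∫ t in (0:ℝ)..τ, (c + κ * cumHazard h t) * survDens h t ≤ c + κ := by
  have hF : ∀ t, HasDerivAt
      (fun u => -((c + κ * (1 + cumHazard h u)) * Real.exp (-cumHazard h u)))
      ((c + κ * cumHazard h t) * survDens h t) t := by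
    intro t
    have hΛ := hasDerivAt_cumHazard hh t
    refine ((((hΛ.const_add 1).const_mul κ).const_add c).mul hΛ.neg.exp).neg.congr_deriv ?_
    simp only [survDens, Pi.neg_apply]
    ring
  have hint : IntervalIntegrable (fun t => (c + κ * cumHazard h t) * survDens h t) volume 0 τ :=
    ((continuous_const.add (continuous_const.mul (continuous_cumHazard hh))).mul
      (continuous_survDens hh)).intervalIntegrable _ _
  have hΛτ : 0 ≤ cumHazard h τ := intervalIntegral.integral_nonneg hτ hnonneg
  rw [intervalIntegral.integral_eq_sub_of_hasDerivAt (fun t _ => hF t) hint]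
  simp only [cumHazard, intervalIntegral.integral_same, neg_zero, Real.exp_zero]
  have := mul_nonneg (by positivity : 0 ≤ c + κ * (1 + cumHazard h τ))
    (Real.exp_pos (-cumHazard h τ)).le
  unfold cumHazard at this
  linarith

lemma log_survDens_div_survDens {t : ℝ} (h₀t : 0 < h₀ t) (ht : 0 < h t) :
    Real.log (survDens h₀ t / survDens h t) =
      Real.log (h₀ t) - Real.log (h t) + (cumHazard h t - cumHazard h₀ t) := by
  rw [survDens, survDens, Real.log_div (by positivity) (by positivity),
    Real.log_mul h₀t.ne' (Real.exp_ne_zero _), Real.log_mul ht.ne' (Real.exp_ne_zero _),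
    Real.log_exp, Real.log_exp]
  ring

lemma log_survDens_div_survDens_le (hh₀ : Continuous h₀) (hh : Continuous h)
    (hpos₀ : ∀ t, 0 < h₀ t) (hpos : ∀ t, 0 < h t) {τ a b κ : ℝ}
    (hlog : ∀ t ∈ Set.Icc 0 τ, Real.log (h₀ t) - Real.log (h t) ≤ a)
    (hsub : ∀ t ∈ Set.Icc 0 τ, h t - h₀ t ≤ κ * h₀ t + b) (hb : 0 ≤ b)
    {t : ℝ} (ht : t ∈ Set.Icc 0 τ) :
    Real.log (survDens h₀ t / survDens h t) ≤ a + b * τ + κ * cumHazard h₀ t := by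
  have hΛ : cumHazard h t - cumHazard h₀ t ≤ κ * cumHazard h₀ t + b * t := by
    rw [cumHazard_sub_cumHazard hh hh₀]
    calc ∫ s in (0:ℝ)..t, (h s - h₀ s)
        ≤ ∫ s in (0:ℝ)..t, (κ * h₀ s + b) :=
          intervalIntegral.integral_mono_on ht.1 ((hh.sub hh₀).intervalIntegrable _ _)
            ((continuous_const.mul hh₀).add continuous_const |>.intervalIntegrable _ _)
            fun s hs => hsub s ⟨hs.1, hs.2.trans ht.2⟩
      _ = κ * cumHazard h₀ t + b * t := by
          rw [intervalIntegral.integral_add (f := fun s => κ * h₀ s)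
              ((continuous_const.mul hh₀).intervalIntegrable _ _) intervalIntegrable_const,
            intervalIntegral.integral_const_mul, intervalIntegral.integral_const, smul_eq_mul,
            sub_zero, mul_comm t, cumHazard]
  rw [log_survDens_div_survDens (hpos₀ t) (hpos t)]
  linarith [hlog t ht, mul_le_mul_of_nonneg_left ht.2 hb]

theorem setIntegral_log_survDens_div_mul_survDens_le (hh₀ : Continuous h₀) (hh : Continuous h)
    (hpos₀ : ∀ t, 0 < h₀ t) (hpos : ∀ t, 0 < h t) {τ a b κ : ℝ}
    (hlog : ∀ t ∈ Set.Icc 0 τ, Real.log (h₀ t) - Real.log (h t) ≤ a)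
    (hsub : ∀ t ∈ Set.Icc 0 τ, h t - h₀ t ≤ κ * h₀ t + b)
    (hτ : 0 ≤ τ) (ha : 0 ≤ a) (hb : 0 ≤ b) (hκ : 0 ≤ κ) :
    ∫ t in Set.Icc 0 τ, Real.log (survDens h₀ t / survDens h t) * survDens h₀ t ≤
      a + b * τ + κ := by
  have hf₀ := continuous_survDens hh₀
  have hf := continuous_survDens hh
  have hint : Continuous fun t => Real.log (survDens h₀ t / survDens h t) * survDens h₀ t :=
    ((hf₀.div hf fun t => (survDens_pos hpos t).ne').log
      fun t => (div_pos (survDens_pos hpos₀ t) (survDens_pos hpos t)).ne').mul hf₀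
  calc ∫ t in Set.Icc 0 τ, Real.log (survDens h₀ t / survDens h t) * survDens h₀ t
      ≤ ∫ t in Set.Icc 0 τ, (a + b * τ + κ * cumHazard h₀ t) * survDens h₀ t :=
        setIntegral_mono_on hint.integrableOn_Icc
          (((continuous_const.add (continuous_const.mul (continuous_cumHazard hh₀))).mul
            hf₀).integrableOn_Icc) measurableSet_Icc fun t ht =>
          mul_le_mul_of_nonneg_right
            (log_survDens_div_survDens_le hh₀ hh hpos₀ hpos hlog hsub hb ht)
            (survDens_pos hpos₀ t).le
    _ = ∫ t in (0:ℝ)..τ, (a + b * τ + κ * cumHazard h₀ t) * survDens h₀ t := by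
        rw [intervalIntegral.integral_of_le hτ, integral_Icc_eq_integral_Ioc]
    _ ≤ a + b * τ + κ :=
        intervalIntegral_affine_cumHazard_mul_survDens_le hh₀ hτ (fun t _ => (hpos₀ t).le)
          (by positivity) hκ

end Survival

lemma sigmoid_eq_real_sigmoid : sigmoid = Real.sigmoid := funext fun _ => one_div _

section Model

variable {d : ℕ} {θ : ℝ × (Fin (d + 1) → ℝ → ℝ)} {x : Fin d → ℝ} {t : ℝ}

/-- The hazard rate `Ω σ(Y_x(t))` of `f_x(·,θ)`, continued constantly to `t < 0` so that it is
continuous on `ℝ`. -/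
def hazard (θ : ℝ × (Fin (d + 1) → ℝ → ℝ)) (x : Fin d → ℝ) (t : ℝ) : ℝ :=
  θ.1 * Real.sigmoid (Yproc θ.2 x (max t 0))

lemma hazard_of_nonneg (ht : 0 ≤ t) : hazard θ x t = θ.1 * Real.sigmoid (Yproc θ.2 x t) := by
  rw [hazard, max_eq_left ht]

lemma hazard_pos (hΩ : 0 < θ.1) (t : ℝ) : 0 < hazard θ x t :=
  mul_pos hΩ (Real.sigmoid_pos _)

lemma continuous_hazard (hη : ∀ j, ContinuousOn (θ.2 j) (Set.Ici 0)) :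
    Continuous (hazard θ x) := by
  have hmax : Continuous fun t : ℝ => max t 0 := continuous_id.max continuous_const
  have hηj : ∀ j, Continuous fun t => θ.2 j (max t 0) := fun j =>
    (hη j).comp_continuous hmax fun t => le_max_right t 0
  exact continuous_const.mul <| continuous_sigmoid.comp <|
    (hηj 0).add (continuous_finsetSum _ fun j _ => continuous_const.mul (hηj j.succ))

lemma dens_eq_survDens_hazard (ht : 0 ≤ t) : dens θ x t = survDens (hazard θ x) t := by
  have hΛ : (∫ s in (0:ℝ)..t, θ.1 * sigmoid (Yproc θ.2 x s)) = cumHazard (hazard θ x) t :=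
    intervalIntegral.integral_congr fun s hs => by
      rw [hazard_of_nonneg (Set.uIcc_of_le ht ▸ hs).1, sigmoid_eq_real_sigmoid]
  rw [dens, if_pos ht, hΛ, survDens, hazard_of_nonneg ht, sigmoid_eq_real_sigmoid]

lemma dens_nonneg (hΩ : 0 ≤ θ.1) (x : Fin d → ℝ) (t : ℝ) : 0 ≤ dens θ x t := by
  rw [dens, sigmoid_eq_real_sigmoid]
  split_ifs
  · exact mul_nonneg (mul_nonneg hΩ (Real.sigmoid_nonneg _)) (Real.exp_pos _).le
  · exact le_rfl

end Model

lemma abs_Yproc_sub_Yproc_le {d : ℕ} {η₀ η : Fin (d + 1) → ℝ → ℝ} {x : Fin d → ℝ}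
    (hx : x ∈ unitCube d) {t e : ℝ} (h : ∀ j, |η j t - η₀ j t| ≤ e) :
    |Yproc η x t - Yproc η₀ x t| ≤ (d + 1) * e := by
  have hterm : ∀ j : Fin d, |x j * (η j.succ t - η₀ j.succ t)| ≤ e := fun j => by
    obtain ⟨hx0, hx1⟩ := hx j (Set.mem_univ j)
    rw [abs_mul, abs_of_nonneg hx0]
    exact (mul_le_of_le_one_left (abs_nonneg _) hx1).trans (h j.succ)
  have hsum : |∑ j : Fin d, x j * (η j.succ t - η₀ j.succ t)| ≤ d * e :=
    (Finset.abs_sum_le_sum_abs _ _).trans <| by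
      simpa using Finset.sum_le_sum fun j (_ : j ∈ Finset.univ) => hterm j
  have hdiff : Yproc η x t - Yproc η₀ x t =
      (η 0 t - η₀ 0 t) + ∑ j : Fin d, x j * (η j.succ t - η₀ j.succ t) := by
    simp only [Yproc, mul_sub, Finset.sum_sub_distrib]
    ring
  rw [hdiff]
  linarith [abs_add_le (η 0 t - η₀ 0 t) (∑ j : Fin d, x j * (η j.succ t - η₀ j.succ t)), h 0]

theorem setIntegral_log_dens_div_mul_dens_le {d : ℕ} {x : Fin d → ℝ} {Ω₀ Ω : ℝ}
    {η₀ η : Fin (d + 1) → ℝ → ℝ} (hΩ₀ : 0 < Ω₀) (hΩ : 0 < Ω)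
    (hη₀ : ∀ j, ContinuousOn (η₀ j) (Set.Ici 0)) (hη : ∀ j, ContinuousOn (η j) (Set.Ici 0))
    {τ ε : ℝ} (hτ : 0 ≤ τ) (hY : ∀ t ∈ Set.Icc 0 τ, |Yproc η x t - Yproc η₀ x t| ≤ ε) :
    ∫ t in Set.Icc 0 τ, Real.log (dens (Ω₀, η₀) x t / dens (Ω, η) x t) * dens (Ω₀, η₀) x t ≤
      max (Real.log (Ω₀ / Ω)) 0 + ε + max Ω₀ Ω * (4⁻¹ * ε) * τ + max (Ω / Ω₀ - 1) 0 := by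
  have hε : 0 ≤ ε := (abs_nonneg _).trans (hY 0 ⟨le_rfl, hτ⟩)
  have hdens : Set.EqOn
      (fun t => Real.log (dens (Ω₀, η₀) x t / dens (Ω, η) x t) * dens (Ω₀, η₀) x t)
      (fun t => Real.log (survDens (hazard (Ω₀, η₀) x) t / survDens (hazard (Ω, η) x) t) *
        survDens (hazard (Ω₀, η₀) x) t) (Set.Icc 0 τ) := fun t ht => by
    simp only [dens_eq_survDens_hazard ht.1]
  rw [setIntegral_congr_fun measurableSet_Icc hdens]
  refine setIntegral_log_survDens_div_mul_survDens_le (continuous_hazard hη₀)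
    (continuous_hazard hη) (hazard_pos (θ := (Ω₀, η₀)) hΩ₀) (hazard_pos (θ := (Ω, η)) hΩ)
    (fun t ht => ?_) (fun t ht => ?_)
    hτ (by positivity) (by positivity) (le_max_right _ _)
  · rw [hazard_of_nonneg ht.1, hazard_of_nonneg ht.1]
    exact (Real.log_mul_sigmoid_sub_log_mul_sigmoid_le hΩ₀ hΩ _ _).trans
      (add_le_add_right (hY t ht) _)
  · rw [hazard_of_nonneg ht.1, hazard_of_nonneg ht.1]
    refine (Real.mul_sigmoid_sub_mul_sigmoid_le hΩ₀ hΩ.le _ _).trans ?_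
    gcongr
    exact hY t ht

lemma max_log_inv_add_max_sub_one_le {r δ : ℝ} (hδ : δ < 1) (hr : |r - 1| < δ) :
    max (Real.log r⁻¹) 0 + max (r - 1) 0 ≤ δ / (1 - δ) := by
  have hδpos : 0 < δ := (abs_nonneg _).trans_lt hr
  rw [abs_lt] at hr
  have hδ0 : 0 < 1 - δ := by linarith
  have hr0 : 0 < r := by linarith
  rcases le_total r 1 with hr1 | hr1
  · have hlog : Real.log r⁻¹ ≤ δ / (1 - δ) :=
      calc Real.log r⁻¹ ≤ r⁻¹ - 1 := Real.log_le_sub_one_of_pos (inv_pos.2 hr0)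
        _ ≤ δ / (1 - δ) := by
          rw [inv_eq_one_div, div_sub_one hr0.ne', div_le_div_iff₀ hr0 hδ0]
          nlinarith
    rw [max_eq_right (by linarith : r - 1 ≤ 0), add_zero]
    exact max_le hlog (by positivity)
  · have hlog : Real.log r⁻¹ ≤ 0 :=
      Real.log_nonpos (inv_nonneg.2 hr0.le) (inv_le_one_of_one_le₀ hr1)
    rw [max_eq_right hlog, zero_add]
    refine max_le ((le_div_iff₀ hδ0).2 ?_) (by positivity)
    nlinarith

theorem truncated_KL_bound_general
    {d : ℕ}
    (x : Fin d → ℝ) (hx : x ∈ unitCube d)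
    (τ : ℝ) (hτ : 1 ≤ τ)
    (δ : ℝ) (hδ : δ ∈ Set.Ioo (0:ℝ) (1/2))
    (Ω₀ : ℝ) (hΩ₀ : 0 < Ω₀)
    (η₀ η : Fin (d + 1) → ℝ → ℝ)
    (hη₀cont : ∀ j, ContinuousOn (η₀ j) (Set.Ici 0))
    (hηcont : ∀ j, ContinuousOn (η j) (Set.Ici 0))
    (Ω : ℝ) (hΩratio : |Ω / Ω₀ - 1| < δ)
    (hclose : ∀ j, ∀ t ∈ Set.Icc (0:ℝ) τ, |η j t - η₀ j t| ≤ δ / (1 + τ)) :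
    (∫ t in Set.Icc (0:ℝ) τ,
        Real.log (dens (Ω₀, η₀) x t / dens (Ω, η) x t) * dens (Ω₀, η₀) x t) ≤
      δ * (1 / (1 - δ) + (d + 1) / (τ + 1) + Ω₀ * (d + 1) +
        Ω₀ * ∫ t in Set.Ici (0:ℝ), t * dens (Ω₀, η₀) x t) := by
  obtain ⟨hδ0, hδ1⟩ := hδ
  have hratio := abs_lt.1 hΩratio
  have hΩ : 0 < Ω := by
    simpa [div_mul_cancel₀ _ hΩ₀.ne'] using mul_pos (by linarith : 0 < Ω / Ω₀) hΩ₀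
  have hΩmax : max Ω₀ Ω ≤ (1 + δ) * Ω₀ := max_le (by nlinarith) <| by
    have := (div_lt_iff₀ hΩ₀).1 (by linarith : Ω / Ω₀ < 1 + δ); linarith
  have hτε : τ * ((d + 1) * (δ / (1 + τ))) ≤ (d + 1) * δ := by
    rw [show τ * ((d + 1) * (δ / (1 + τ))) = (d + 1) * δ * (τ / (1 + τ)) by ring]
    exact mul_le_of_le_one_right (by positivity) ((div_le_one (by linarith)).2 (by linarith))
  have hmean : 0 ≤ ∫ t in Set.Ici (0:ℝ), t * dens (Ω₀, η₀) x t :=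
    setIntegral_nonneg measurableSet_Ici fun t ht => mul_nonneg ht (dens_nonneg hΩ₀.le x t)
  have hΩterms := max_log_inv_add_max_sub_one_le (by linarith) hΩratio
  rw [inv_div] at hΩterms
  refine (setIntegral_log_dens_div_mul_dens_le hΩ₀ hΩ hη₀cont hηcont (by linarith)
    fun t ht => abs_Yproc_sub_Yproc_le hx fun j => hclose j t ht).trans ?_
  have hε : (d + 1) * (δ / (1 + τ)) = δ * ((d + 1) / (τ + 1)) := by ring
  have hdrift : max Ω₀ Ω * (4⁻¹ * ((d + 1) * (δ / (1 + τ)))) * τ ≤ δ * (Ω₀ * (d + 1)) :=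
    calc max Ω₀ Ω * (4⁻¹ * ((d + 1) * (δ / (1 + τ)))) * τ
        = 4⁻¹ * max Ω₀ Ω * (τ * ((d + 1) * (δ / (1 + τ)))) := by ring
      _ ≤ 4⁻¹ * ((1 + δ) * Ω₀) * ((d + 1) * δ) := by gcongr
      _ ≤ δ * (Ω₀ * (d + 1)) := by
          nlinarith [mul_pos (mul_pos hδ0 hΩ₀) (by positivity : (0:ℝ) < d + 1)]
  have : δ / (1 - δ) = δ * (1 / (1 - δ)) := by ring
  linarith [mul_nonneg hδ0.le (mul_nonneg hΩ₀.le hmean)]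

/-- Bound for the truncated Kullback–Leibler integral: for `x ∈ [0,1]^d`, `τ ≥ 1`,
`δ ∈ (0,1/2)`, `|Ω/Ω₀ - 1| < δ`, and `sup_{[0,τ]}|η_j - η_{j,0}| ≤ δ/(1+τ)` for all `j`,
`∫₀^τ log(f_x(t,θ₀)/f_x(t,θ)) f_x(t,θ₀) dt ≤ δ (1/(1-δ) + (d+1)/(τ+1) + Ω₀(d+1) + Ω₀ ∫₀^∞ t f_x(t,θ₀) dt)`. -/
theorem truncated_KL_bound
    {d : ℕ} (hd1 : 1 ≤ d)
    (x : Fin d → ℝ) (hx : x ∈ unitCube d)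
    (τ : ℝ) (hτ : 1 ≤ τ)
    (δ : ℝ) (hδ : δ ∈ Set.Ioo (0:ℝ) (1/2))
    (Ω₀ : ℝ) (hΩ₀ : 0 < Ω₀)
    (η₀ η : Fin (d + 1) → ℝ → ℝ)
    (hη₀cont : ∀ j, ContinuousOn (η₀ j) (Set.Ici 0))
    (hηcont : ∀ j, ContinuousOn (η j) (Set.Ici 0))
    (Ω : ℝ) (hΩratio : |Ω / Ω₀ - 1| < δ)
    (hclose : ∀ j, ∀ t ∈ Set.Icc (0:ℝ) τ, |η j t - η₀ j t| ≤ δ / (1 + τ)) :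
    (∫ t in Set.Icc (0:ℝ) τ,
        Real.log (dens (Ω₀, η₀) x t / dens (Ω, η) x t) * dens (Ω₀, η₀) x t) ≤
      δ * (1 / (1 - δ) + (d + 1) / (τ + 1) + Ω₀ * (d + 1) +
        Ω₀ * ∫ t in Set.Ici (0:ℝ), t * dens (Ω₀, η₀) x t) :=
  truncated_KL_bound_general x hx τ hτ δ hδ Ω₀ hΩ₀ η₀ η hη₀cont hηcont Ω hΩratio hclose

end
end
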